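/- arXiv:2412.01209 — 3 statements merged into one kernel-verified Lean document; each statement's English description precedes it below -/
import Mathlib

section
/- Let d ≥ 1, let V satisfy Assumption (A), and let φ be the Hamiltonian flow of p. Fix T > 0 and ν > 1/2. Then there exists a constant C' > 0 such that for all R ≥ 1, all t ∈ [−T, T], and all ρ₁, ρ₂ ∈ ℝ^{2d}: ⟨(π ∘ φ^t)(ρ₁)/R⟩^(−2ν) ≤ C' · ⟨(π ∘ φ^t)(ρ₂)/R⟩^(−2ν) · ⟨ρ₂ − ρ₁⟩^(2ν). -/
open Real MeasureTheory

noncomputable section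

abbrev E (d : ℕ) := EuclideanSpace ℝ (Fin d)

/-- Assumption (A): `V` is smooth, nonnegative, comparable to `⟨x⟩^{2m}` with `m ∈ (0,1]`,
with derivative bounds `‖D^k V(x)‖ ≤ C_k ⟨x⟩^{2m-k}`. Here `⟨x⟩^s = (1+‖x‖²)^{s/2}`. -/
def AssumptionA {d : ℕ} (V : E d → ℝ) (m : ℝ) : Prop :=
  ContDiff ℝ (⊤ : ℕ∞) V ∧ (∀ x, 0 ≤ V x) ∧ 0 < m ∧ m ≤ 1 ∧
  (∃ C > 0, ∀ x : E d, C⁻¹ * (1 + ‖x‖ ^ 2) ^ m - C ≤ V x ∧ V x ≤ C * (1 + ‖x‖ ^ 2) ^ m) ∧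
  (∀ k : ℕ, ∃ Ck > 0, ∀ x : E d,
    ‖iteratedFDeriv ℝ k V x‖ ≤ Ck * (1 + ‖x‖ ^ 2) ^ (m - (k : ℝ) / 2))

/-- The classical Hamiltonian `p(x,ξ) = ½|ξ|² + V(x)`. -/
def ham {d : ℕ} (V : E d → ℝ) (ρ : E d × E d) : ℝ := (1 / 2) * ‖ρ.2‖ ^ 2 + V ρ.1

/-- The Hamiltonian flow of `p`: smooth in `(t,ρ)`, `φ⁰ = id`, and
`d/dt φᵗ(x,ξ) = (ξᵗ, -∇V(xᵗ))`. -/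
def IsHamFlow {d : ℕ} (V : E d → ℝ) (φ : ℝ → E d × E d → E d × E d) : Prop :=
  ContDiff ℝ (⊤ : ℕ∞) (fun q : ℝ × (E d × E d) => φ q.1 q.2) ∧
  (∀ ρ, φ 0 ρ = ρ) ∧
  (∀ t ρ, HasDerivAt (fun s => φ s ρ) ((φ t ρ).2, -(gradient V (φ t ρ).1)) t)

/-- Two global solutions of an autonomous Lipschitz ODE diverge at most exponentially. -/
lemma flow_dist_aux {X : Type*} [NormedAddCommGroup X] [NormedSpace ℝ X] (F : X → X)
    (L : NNReal) (hF : LipschitzWith L F) (f g : ℝ → X)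
    (hf : ∀ s, HasDerivAt f (F (f s)) s) (hg : ∀ s, HasDerivAt g (F (g s)) s)
    (b : ℝ) : ∀ t ∈ Set.Icc (0 : ℝ) b,
      dist (f t) (g t) ≤ dist (f 0) (g 0) * Real.exp (L * b) := by
  intro t ht
  have key := dist_le_of_trajectories_ODE (v := fun _ y => F y) (K := L)
    (f := f) (g := g) (a := 0) (b := b) (δ := dist (f 0) (g 0))
    (fun _ => hF)
    (fun s _ => (hf s).continuousAt.continuousWithinAt)
    (fun s _ => (hf s).hasDerivWithinAt)
    (fun s _ => (hg s).continuousAt.continuousWithinAt)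
    (fun s _ => (hg s).hasDerivWithinAt)
    le_rfl t ht
  refine key.trans ?_
  have : Real.exp ((L : ℝ) * (t - 0)) ≤ Real.exp ((L : ℝ) * b) := by
    apply Real.exp_le_exp.2
    have := ht.2
    nlinarith [L.coe_nonneg]
  exact mul_le_mul_of_nonneg_left this dist_nonneg

set_option maxHeartbeats 1000000 in
/-- `⟨(π∘φᵗ)(ρ₁)/R⟩^{-2ν} ≤ C' ⟨(π∘φᵗ)(ρ₂)/R⟩^{-2ν} ⟨ρ₂-ρ₁⟩^{2ν}` uniformly in
`R ≥ 1` and `t ∈ [-T,T]`. -/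
theorem stmt_9 (d : ℕ) (hd : 1 ≤ d) (V : E d → ℝ) (m : ℝ) (hV : AssumptionA V m)
    (φ : ℝ → E d × E d → E d × E d) (hφ : IsHamFlow V φ)
    (T : ℝ) (hT : 0 < T) (ν : ℝ) (hν : 1 / 2 < ν) :
    ∃ C' > 0, ∀ R : ℝ, 1 ≤ R → ∀ t ∈ Set.Icc (-T) T, ∀ ρ₁ ρ₂ : E d × E d,
      (1 + ‖R⁻¹ • (φ t ρ₁).1‖ ^ 2) ^ (-ν) ≤
        C' * (1 + ‖R⁻¹ • (φ t ρ₂).1‖ ^ 2) ^ (-ν) * (1 + ‖ρ₂ - ρ₁‖ ^ 2) ^ ν := by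
  obtain ⟨hsmooth, hpos, hm0, hm1, hcomp, hder⟩ := hV
  obtain ⟨C2, hC2pos, hC2⟩ := hder 2
  have hν0 : 0 ≤ ν := by linarith
  -- `fderiv V` is Lipschitz
  have hVdiff : Differentiable ℝ V := hsmooth.differentiable (by simp)
  have hfd : Differentiable ℝ (fderiv ℝ V) :=
    (hsmooth.fderiv_right (m := (⊤ : ℕ∞)) (by simp)).differentiable (by simp)
  have hbound : ∀ x, ‖fderiv ℝ (fderiv ℝ V) x‖ ≤ C2 := by
    intro x
    have h1 : ‖fderiv ℝ (fderiv ℝ V) x‖ = ‖iteratedFDeriv ℝ 2 V x‖ := by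
      calc ‖fderiv ℝ (fderiv ℝ V) x‖
          = ‖iteratedFDeriv ℝ 0 (fderiv ℝ (fderiv ℝ V)) x‖ := (norm_iteratedFDeriv_zero (f := fderiv ℝ (fderiv ℝ V)) (x := x)).symm
        _ = ‖iteratedFDeriv ℝ 1 (fderiv ℝ V) x‖ := norm_iteratedFDeriv_fderiv
        _ = ‖iteratedFDeriv ℝ 2 V x‖ := norm_iteratedFDeriv_fderiv
    have h2 : (1 + ‖x‖ ^ 2 : ℝ) ^ (m - (2 : ℕ) / 2 : ℝ) ≤ 1 := by
      apply Real.rpow_le_one_of_one_le_of_nonpos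
      · nlinarith [sq_nonneg ‖x‖]
      · push_cast; linarith
    calc ‖fderiv ℝ (fderiv ℝ V) x‖ = ‖iteratedFDeriv ℝ 2 V x‖ := h1
      _ ≤ C2 * (1 + ‖x‖ ^ 2) ^ (m - (2 : ℕ) / 2 : ℝ) := hC2 x
      _ ≤ C2 * 1 := by nlinarith
      _ = C2 := mul_one _
  have hfdLip : LipschitzWith C2.toNNReal (fderiv ℝ V) := by
    apply lipschitzWith_of_nnnorm_fderiv_le hfd
    intro x
    rw [← NNReal.coe_le_coe, coe_nnnorm, Real.coe_toNNReal _ hC2pos.le]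
    exact hbound x
  -- hence the gradient is Lipschitz
  have hgrad : LipschitzWith C2.toNNReal (gradient V) := fun x y => by
    simpa only [gradient,
      (InnerProductSpace.toDual ℝ (E d)).symm.isometry.edist_eq] using hfdLip x y
  -- the vector field is Lipschitz
  set F : E d × E d → E d × E d := fun ρ => (ρ.2, -gradient V ρ.1) with hFdef
  have hgradneg : LipschitzWith C2.toNNReal (fun ρ : E d × E d => -gradient V ρ.1) := by
    have : LipschitzWith C2.toNNReal (fun ρ : E d × E d => gradient V ρ.1) := by
      simpa [Function.comp_def] using hgrad.comp LipschitzWith.prod_fst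
    exact fun x y => by simpa only [edist_neg_neg] using this x y
  set L : NNReal := max 1 C2.toNNReal with hLdef
  have hF : LipschitzWith L F := LipschitzWith.prodMk LipschitzWith.prod_snd hgradneg
  -- flow expansion bound
  set M : ℝ := Real.exp (L * T) with hMdef
  have hM1 : 1 ≤ M := Real.one_le_exp (by positivity)
  have hM0 : 0 ≤ M := by linarith
  have flow : ∀ t ∈ Set.Icc (-T) T, ∀ ρ₁ ρ₂ : E d × E d,
      dist (φ t ρ₁) (φ t ρ₂) ≤ dist ρ₁ ρ₂ * M := by
    intro t ht ρ₁ ρ₂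
    rcases le_or_gt 0 t with h0 | h0
    · have := flow_dist_aux F L hF (fun s => φ s ρ₁) (fun s => φ s ρ₂)
        (fun s => hφ.2.2 s ρ₁) (fun s => hφ.2.2 s ρ₂) T t ⟨h0, ht.2⟩
      simpa [hφ.2.1, hMdef] using this
    · have hder1 : ∀ ρ, ∀ s : ℝ, HasDerivAt (fun u => φ (-u) ρ) (-F (φ (-s) ρ)) s := by
        intro ρ s
        have h := hφ.2.2 (-s) ρ
        have h2 := h.scomp s (hasDerivAt_neg s)
        have hgoal : -F (φ (-s) ρ) = (-(φ (-s) ρ).2, gradient V (φ (-s) ρ).1) := by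
          simp [hFdef]
        rw [hgoal]
        simpa [Function.comp_def] using h2
      have hFneg : LipschitzWith L (fun y => -F y) := fun x y => by
        simpa only [edist_neg_neg] using hF x y
      have := flow_dist_aux (fun y => -F y) L hFneg (fun s => φ (-s) ρ₁) (fun s => φ (-s) ρ₂)
        (fun s => hder1 ρ₁ s) (fun s => hder1 ρ₂ s) T (-t) ⟨by linarith, by linarith [ht.1]⟩
      simpa [hφ.2.1, hMdef] using this
  -- the constant
  refine ⟨(2 * (1 + M ^ 2)) ^ ν, Real.rpow_pos_of_pos (by positivity) ν, ?_⟩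
  intro R hR t ht ρ₁ ρ₂
  set a : E d := R⁻¹ • (φ t ρ₁).1
  set b : E d := R⁻¹ • (φ t ρ₂).1
  have hR0 : 0 < R := lt_of_lt_of_le one_pos hR
  -- bound on ‖a - b‖
  have hab : ‖a - b‖ ≤ M * ‖ρ₂ - ρ₁‖ := by
    have h1 : a - b = R⁻¹ • ((φ t ρ₁).1 - (φ t ρ₂).1) := by
      simp [a, b, smul_sub]
    have h2 : ‖a - b‖ = R⁻¹ * ‖(φ t ρ₁).1 - (φ t ρ₂).1‖ := by
      rw [h1, norm_smul, Real.norm_eq_abs, abs_of_pos (by positivity)]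
    have h3 : ‖(φ t ρ₁).1 - (φ t ρ₂).1‖ ≤ ‖φ t ρ₁ - φ t ρ₂‖ := by
      have := norm_fst_le (φ t ρ₁ - φ t ρ₂)
      simpa using this
    have h4 : ‖φ t ρ₁ - φ t ρ₂‖ ≤ ‖ρ₁ - ρ₂‖ * M := by
      have := flow t ht ρ₁ ρ₂
      simpa [dist_eq_norm] using this
    have h5 : R⁻¹ ≤ 1 := by
      rw [inv_le_one_iff₀]; right; exact hR
    have h6 : ‖ρ₁ - ρ₂‖ = ‖ρ₂ - ρ₁‖ := norm_sub_rev _ _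
    have hnn : 0 ≤ ‖(φ t ρ₁).1 - (φ t ρ₂).1‖ := norm_nonneg _
    calc ‖a - b‖ = R⁻¹ * ‖(φ t ρ₁).1 - (φ t ρ₂).1‖ := h2
      _ ≤ 1 * ‖(φ t ρ₁).1 - (φ t ρ₂).1‖ := by nlinarith
      _ = ‖(φ t ρ₁).1 - (φ t ρ₂).1‖ := one_mul _
      _ ≤ ‖φ t ρ₁ - φ t ρ₂‖ := h3
      _ ≤ ‖ρ₁ - ρ₂‖ * M := h4
      _ = M * ‖ρ₂ - ρ₁‖ := by rw [h6]; ring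
  -- Peetre-type inequality
  set A : ℝ := 1 + ‖a‖ ^ 2 with hAdef
  set B : ℝ := 1 + ‖b‖ ^ 2 with hBdef
  set D : ℝ := 1 + ‖ρ₂ - ρ₁‖ ^ 2 with hDdef
  have hA0 : (0 : ℝ) < A := by positivity
  have hB0 : (0 : ℝ) < B := by positivity
  have hD0 : (0 : ℝ) < D := by positivity
  have hBAD : B ≤ (2 * (1 + M ^ 2)) * A * D := by
    have h1 : ‖b‖ ≤ ‖a‖ + ‖a - b‖ := by
      calc ‖b‖ = ‖a - (a - b)‖ := by congr 1; abel
        _ ≤ ‖a‖ + ‖a - b‖ := norm_sub_le _ _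
    have h2 : ‖b‖ ^ 2 ≤ 2 * ‖a‖ ^ 2 + 2 * ‖a - b‖ ^ 2 := by
      have h2a : ‖b‖ ^ 2 ≤ (‖a‖ + ‖a - b‖) ^ 2 := by
        apply pow_le_pow_left₀ (norm_nonneg b) h1
      nlinarith [sq_nonneg (‖a‖ - ‖a - b‖)]
    have h3 : ‖a - b‖ ^ 2 ≤ M ^ 2 * ‖ρ₂ - ρ₁‖ ^ 2 := by
      have h3a : ‖a - b‖ ^ 2 ≤ (M * ‖ρ₂ - ρ₁‖) ^ 2 := by
        apply pow_le_pow_left₀ (norm_nonneg (a - b)) hab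
      nlinarith
    rw [hAdef, hBdef, hDdef]
    nlinarith [sq_nonneg ‖a‖, sq_nonneg ‖ρ₂ - ρ₁‖, sq_nonneg M,
      mul_nonneg (sq_nonneg ‖a‖) (sq_nonneg ‖ρ₂ - ρ₁‖),
      mul_nonneg (sq_nonneg M) (sq_nonneg ‖a‖),
      mul_nonneg (sq_nonneg M) (mul_nonneg (sq_nonneg ‖a‖) (sq_nonneg ‖ρ₂ - ρ₁‖)),
      mul_nonneg (sq_nonneg M) (sq_nonneg ‖ρ₂ - ρ₁‖)]
  have hrpow : B ^ ν ≤ (2 * (1 + M ^ 2)) ^ ν * A ^ ν * D ^ ν := by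
    have h1 : B ^ ν ≤ ((2 * (1 + M ^ 2)) * A * D) ^ ν :=
      Real.rpow_le_rpow hB0.le hBAD hν0
    have h2 : ((2 * (1 + M ^ 2)) * A * D) ^ ν = (2 * (1 + M ^ 2)) ^ ν * A ^ ν * D ^ ν := by
      rw [Real.mul_rpow (by positivity) hD0.le, Real.mul_rpow (by positivity) hA0.le]
    rw [← h2]; exact h1
  -- conclude
  have hAν : (0 : ℝ) < A ^ ν := Real.rpow_pos_of_pos hA0 ν
  have hBν : (0 : ℝ) < B ^ ν := Real.rpow_pos_of_pos hB0 ν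
  have hDν : (0 : ℝ) < D ^ ν := Real.rpow_pos_of_pos hD0 ν
  rw [Real.rpow_neg hA0.le, Real.rpow_neg hB0.le]
  calc (A ^ ν)⁻¹ = (A ^ ν)⁻¹ * (B ^ ν)⁻¹ * B ^ ν := by field_simp
    _ ≤ (A ^ ν)⁻¹ * (B ^ ν)⁻¹ * ((2 * (1 + M ^ 2)) ^ ν * A ^ ν * D ^ ν) := by
        apply mul_le_mul_of_nonneg_left hrpow (by positivity)
    _ = (2 * (1 + M ^ 2)) ^ ν * (B ^ ν)⁻¹ * D ^ ν * ((A ^ ν)⁻¹ * A ^ ν) := by ring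
    _ = (2 * (1 + M ^ 2)) ^ ν * (B ^ ν)⁻¹ * D ^ ν := by
        rw [inv_mul_cancel₀ hAν.ne', mul_one]

end
end

section
/- Let n ≥ 1 and let g : ℝ^n → (0, ∞) be a C¹ order function with structure constants (C, N), i.e. g(ρ₀ + ρ) ≤ C g(ρ₀) ⟨ρ⟩^N for all ρ₀, ρ. Suppose κ ≥ 0 is such that |∇g(ρ)| ≤ κ g(ρ) for all ρ ∈ ℝ^n. Then there exists a constant C' > 0, depending only on C, N and n (and not on κ or g), such that for every ρ₀ ∈ ℝ^n: | π^(−n/2) ∫_{ℝ^n} g(ρ₀ + ρ) e^(−|ρ|²) dρ − g(ρ₀) | ≤ C' κ g(ρ₀). -/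
open Real MeasureTheory

/-! On the segment from `ρ₀` to `ρ₀ + ρ` the order bound gives `g ≤ C g(ρ₀) ⟨ρ⟩^N`, so the mean
value theorem and `|∇g| ≤ κ g` give `|g(ρ₀ + ρ) - g(ρ₀)| ≤ κ C g(ρ₀) ⟨ρ⟩^(N+1)`. Averaging this
against the normalized Gaussian, whose moments are all finite, bounds the error by `κ g(ρ₀)`
times `C` times the Gaussian average of `⟨ρ⟩^(N+1)`, which depends only on `C`, `N` and `n`. -/

lemma one_add_rpow_le_mul_exp_half {s : ℝ} (hs : 0 ≤ s) {y : ℝ} (hy : 0 ≤ y) :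
    (1 + y) ^ s ≤ (2 * s) ^ s * exp (1 / 2) * exp (y / 2) := by
  have h := ProbabilityTheory.rpow_abs_le_mul_exp_abs (1 + y) hs (t := 1 / 2) (by norm_num)
  rw [abs_of_nonneg (by linarith), abs_of_pos (by norm_num)] at h
  calc (1 + y) ^ s ≤ (s / (1 / 2)) ^ s * exp (1 / 2 * (1 + y)) := h
    _ = (2 * s) ^ s * exp (1 / 2) * exp (y / 2) := by
      rw [mul_assoc, ← exp_add]; ring_nf

section Gaussian

variable {V : Type*} [NormedAddCommGroup V] [InnerProductSpace ℝ V] [FiniteDimensional ℝ V]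
  [MeasurableSpace V] [BorelSpace V]

lemma integrable_exp_neg_mul_norm_sq {b : ℝ} (hb : 0 < b) :
    Integrable fun v : V => exp (-b * ‖v‖ ^ 2) := by
  refine (GaussianFourier.integrable_cexp_neg_mul_sq_norm_add (V := V) (b := (b : ℂ))
    (by simpa using hb) 0 0).norm.congr (.of_forall fun v => ?_)
  simp [Complex.norm_exp, ← Complex.ofReal_pow]

lemma integrable_one_add_norm_sq_rpow_mul_exp_neg_norm_sq {s : ℝ} (hs : 0 ≤ s) :
    Integrable fun v : V => (1 + ‖v‖ ^ 2) ^ s * exp (-‖v‖ ^ 2) := by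
  refine (((integrable_exp_neg_mul_norm_sq (V := V) (b := 1 / 2) (by norm_num)).const_mul
    ((2 * s) ^ s * exp (1 / 2)))).mono' (by fun_prop) (.of_forall fun v => ?_)
  rw [norm_of_nonneg (by positivity)]
  calc (1 + ‖v‖ ^ 2) ^ s * exp (-‖v‖ ^ 2)
      ≤ (2 * s) ^ s * exp (1 / 2) * exp (‖v‖ ^ 2 / 2) * exp (-‖v‖ ^ 2) := by
        gcongr; exact one_add_rpow_le_mul_exp_half hs (by positivity)
    _ = (2 * s) ^ s * exp (1 / 2) * exp (-(1 / 2) * ‖v‖ ^ 2) := by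
        rw [mul_assoc _ (exp _), ← exp_add]; ring_nf

variable (V) in
noncomputable def gaussianAverage (f : V → ℝ) : ℝ :=
  π ^ (-(Module.finrank ℝ V : ℝ) / 2) * ∫ v, f v * exp (-‖v‖ ^ 2)

lemma gaussianAverage_const (c : ℝ) : gaussianAverage V (fun _ => c) = c := by
  have hπ : π ^ (-(Module.finrank ℝ V : ℝ) / 2) * π ^ ((Module.finrank ℝ V : ℝ) / 2) = 1 := by
    rw [← rpow_add pi_pos, neg_div, neg_add_cancel, rpow_zero]
  have h := GaussianFourier.integral_rexp_neg_mul_sq_norm (V := V) one_pos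
  simp only [neg_mul, one_mul, div_one] at h
  rw [gaussianAverage, integral_const_mul, h, mul_left_comm, hπ, mul_one]

lemma gaussianAverage_sub_const {f : V → ℝ} (hf : Integrable fun v => f v * exp (-‖v‖ ^ 2))
    (c : ℝ) : gaussianAverage V f - c = gaussianAverage V (fun v => f v - c) := by
  conv_lhs => rw [← gaussianAverage_const (V := V) c]
  simp only [gaussianAverage, sub_mul, ← mul_sub]
  rw [integral_sub hf ((integrable_exp_neg_mul_norm_sq (b := 1) one_pos).const_mul c |>.congr
    (.of_forall fun v => by simp))]

lemma abs_gaussianAverage_le (f : V → ℝ) :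
    |gaussianAverage V f| ≤ gaussianAverage V (fun v => |f v|) := by
  unfold gaussianAverage
  rw [abs_mul, abs_of_pos (rpow_pos_of_pos pi_pos _)]
  gcongr
  refine (abs_integral_le_integral_abs).trans_eq (integral_congr_ae (.of_forall fun v => ?_))
  simp [abs_mul]

lemma gaussianAverage_mono {f h : V → ℝ} (hf : ∀ v, 0 ≤ f v)
    (hh : Integrable fun v => h v * exp (-‖v‖ ^ 2)) (hfh : ∀ v, f v ≤ h v) :
    gaussianAverage V f ≤ gaussianAverage V h := by
  refine mul_le_mul_of_nonneg_left (integral_mono_of_nonneg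
    (.of_forall fun v => mul_nonneg (hf v) (exp_pos _).le) hh (.of_forall fun v => ?_))
    (rpow_pos_of_pos pi_pos _).le
  exact mul_le_mul_of_nonneg_right (hfh v) (exp_pos _).le

lemma gaussianAverage_const_mul (c : ℝ) (f : V → ℝ) :
    gaussianAverage V (fun v => c * f v) = c * gaussianAverage V f := by
  simp only [gaussianAverage, mul_assoc, integral_const_mul]
  ring

lemma gaussianAverage_nonneg {f : V → ℝ} (hf : ∀ v, 0 ≤ f v) : 0 ≤ gaussianAverage V f := by
  unfold gaussianAverage
  exact mul_nonneg (rpow_pos_of_pos pi_pos _).le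
    (integral_nonneg fun v => mul_nonneg (hf v) (exp_pos _).le)

end Gaussian

def IsOrderFunction {E : Type*} [SeminormedAddGroup E] (C N : ℝ) (g : E → ℝ) : Prop :=
  ∀ ρ₀ ρ, g (ρ₀ + ρ) ≤ C * g ρ₀ * (1 + ‖ρ‖ ^ 2) ^ (N / 2)

namespace IsOrderFunction

variable {E : Type*} [NormedAddCommGroup E] {C N : ℝ} {g : E → ℝ}

lemma le_of_norm_le (hg : IsOrderFunction C N g) (hC : 0 ≤ C) (hN : 0 ≤ N) {ρ₀ σ ρ : E}
    (hg₀ : 0 ≤ g ρ₀) (hσ : ‖σ‖ ≤ ‖ρ‖) : g (ρ₀ + σ) ≤ C * g ρ₀ * (1 + ‖ρ‖ ^ 2) ^ (N / 2) := by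
  refine (hg ρ₀ σ).trans (mul_le_mul_of_nonneg_left ?_ (mul_nonneg hC hg₀))
  gcongr

lemma abs_sub_le [NormedSpace ℝ E] (hg : IsOrderFunction C N g) (hC : 0 ≤ C) (hN : 0 ≤ N)
    (hd : Differentiable ℝ g) {κ : ℝ} (hκ : 0 ≤ κ) (hderiv : ∀ x, ‖fderiv ℝ g x‖ ≤ κ * g x)
    {ρ₀ : E} (hg₀ : 0 ≤ g ρ₀) (ρ : E) :
    |g (ρ₀ + ρ) - g ρ₀| ≤ κ * C * g ρ₀ * (1 + ‖ρ‖ ^ 2) ^ ((N + 1) / 2) := by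
  have hbound : ∀ x ∈ segment ℝ ρ₀ (ρ₀ + ρ),
      ‖fderiv ℝ g x‖ ≤ κ * (C * g ρ₀ * (1 + ‖ρ‖ ^ 2) ^ (N / 2)) := by
    intro x hx
    rw [segment_eq_image'] at hx
    obtain ⟨t, ht, rfl⟩ := hx
    rw [add_sub_cancel_left]
    have htρ : ‖t • ρ‖ ≤ ‖ρ‖ := by
      rw [norm_smul, norm_of_nonneg ht.1]
      exact mul_le_of_le_one_left (norm_nonneg _) ht.2
    exact (hderiv _).trans (mul_le_mul_of_nonneg_left (hg.le_of_norm_le hC hN hg₀ htρ) hκ)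
  have hmvt := (convex_segment _ _).norm_image_sub_le_of_norm_fderiv_le (fun x _ => hd x) hbound
    (left_mem_segment ℝ ρ₀ (ρ₀ + ρ)) (right_mem_segment ℝ ρ₀ (ρ₀ + ρ))
  rw [add_sub_cancel_left, norm_eq_abs] at hmvt
  have hρ : ‖ρ‖ ≤ (1 + ‖ρ‖ ^ 2) ^ ((1 : ℝ) / 2) := by
    rw [← sqrt_eq_rpow]
    exact le_sqrt_of_sq_le (by linarith)
  calc |g (ρ₀ + ρ) - g ρ₀| ≤ κ * (C * g ρ₀ * (1 + ‖ρ‖ ^ 2) ^ (N / 2)) * ‖ρ‖ := hmvt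
    _ ≤ κ * (C * g ρ₀ * (1 + ‖ρ‖ ^ 2) ^ (N / 2)) * (1 + ‖ρ‖ ^ 2) ^ ((1 : ℝ) / 2) := by
      gcongr
    _ = κ * C * g ρ₀ * (1 + ‖ρ‖ ^ 2) ^ ((N + 1) / 2) := by
      rw [add_div, rpow_add (by positivity)]
      ring

lemma integrable_mul_exp_neg_norm_sq {V : Type*} [NormedAddCommGroup V]
    [InnerProductSpace ℝ V] [FiniteDimensional ℝ V] [MeasurableSpace V] [BorelSpace V]
    {C N : ℝ} {g : V → ℝ} (hg : IsOrderFunction C N g) (hN : 0 ≤ N) (hcont : Continuous g)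
    (hpos : ∀ x, 0 ≤ g x) (ρ₀ : V) :
    Integrable fun ρ => g (ρ₀ + ρ) * exp (-‖ρ‖ ^ 2) := by
  refine ((integrable_one_add_norm_sq_rpow_mul_exp_neg_norm_sq (V := V) (s := N / 2)
    (by positivity)).const_mul (C * g ρ₀)).mono' (by fun_prop) (.of_forall fun ρ => ?_)
  rw [norm_of_nonneg (mul_nonneg (hpos _) (exp_pos _).le), ← mul_assoc]
  exact mul_le_mul_of_nonneg_right (hg ρ₀ ρ) (exp_pos _).le

end IsOrderFunction

theorem stmt_15_general (n : ℕ) (C N : ℝ) (hC : 0 < C) (hN : 0 ≤ N) :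
    ∃ C' > 0, ∀ g : EuclideanSpace ℝ (Fin n) → ℝ, ContDiff ℝ 1 g → (∀ ρ, 0 < g ρ) →
      (∀ ρ₀ ρ, g (ρ₀ + ρ) ≤ C * g ρ₀ * (1 + ‖ρ‖ ^ 2) ^ (N / 2)) →
      ∀ κ : ℝ, 0 ≤ κ → (∀ ρ, ‖gradient g ρ‖ ≤ κ * g ρ) →
      ∀ ρ₀, |Real.pi ^ (-(n : ℝ) / 2) * (∫ ρ, g (ρ₀ + ρ) * Real.exp (-‖ρ‖ ^ 2)) - g ρ₀| ≤
        C' * κ * g ρ₀ := by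
  set A := gaussianAverage (EuclideanSpace ℝ (Fin n)) fun ρ => (1 + ‖ρ‖ ^ 2) ^ ((N + 1) / 2)
  have hA : 0 ≤ A := gaussianAverage_nonneg fun ρ => by positivity
  refine ⟨C * A + 1, by positivity,
    fun g hg hpos (horder : IsOrderFunction C N g) κ hκ hgrad ρ₀ => ?_⟩
  have hfderiv (x : EuclideanSpace ℝ (Fin n)) : ‖fderiv ℝ g x‖ ≤ κ * g x :=
    ((InnerProductSpace.toDual ℝ _).symm.norm_map _).symm.trans_le (hgrad x)
  have hint := horder.integrable_mul_exp_neg_norm_sq hN hg.continuous (fun x => (hpos x).le) ρ₀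
  have hmajorant : Integrable fun ρ : EuclideanSpace ℝ (Fin n) =>
      κ * C * g ρ₀ * (1 + ‖ρ‖ ^ 2) ^ ((N + 1) / 2) * exp (-‖ρ‖ ^ 2) := by
    simpa only [mul_assoc] using (integrable_one_add_norm_sq_rpow_mul_exp_neg_norm_sq
      (by positivity)).const_mul (κ * C * g ρ₀)
  calc |π ^ (-(n : ℝ) / 2) * (∫ ρ, g (ρ₀ + ρ) * exp (-‖ρ‖ ^ 2)) - g ρ₀|
      = |gaussianAverage _ fun ρ => g (ρ₀ + ρ) - g ρ₀| := by
        rw [← gaussianAverage_sub_const hint, gaussianAverage, finrank_euclideanSpace_fin]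
    _ ≤ gaussianAverage _ fun ρ => |g (ρ₀ + ρ) - g ρ₀| := abs_gaussianAverage_le _
    _ ≤ gaussianAverage _ fun ρ => κ * C * g ρ₀ * (1 + ‖ρ‖ ^ 2) ^ ((N + 1) / 2) :=
        gaussianAverage_mono (fun _ => abs_nonneg _) hmajorant
          (horder.abs_sub_le hC.le hN (hg.differentiable one_ne_zero) hκ hfderiv (hpos ρ₀).le)
    _ = κ * C * g ρ₀ * A := gaussianAverage_const_mul _ _
    _ ≤ (C * A + 1) * κ * g ρ₀ := by
        nlinarith [mul_nonneg hκ (hpos ρ₀).le]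

/-- First-order Taylor estimate against the normalized Gaussian: if `g` is a C¹ order
function with `|∇g| ≤ κ g`, then the Gaussian average of `g` equals `g(ρ₀)` up to a
relative error `C' κ`, with `C'` depending only on the structure constants and `n`. -/
theorem stmt_15 (n : ℕ) (hn : 1 ≤ n) (C N : ℝ) (hC : 0 < C) (hN : 0 ≤ N) :
    ∃ C' > 0, ∀ g : EuclideanSpace ℝ (Fin n) → ℝ, ContDiff ℝ 1 g → (∀ ρ, 0 < g ρ) →
      (∀ ρ₀ ρ, g (ρ₀ + ρ) ≤ C * g ρ₀ * (1 + ‖ρ‖ ^ 2) ^ (N / 2)) →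
      ∀ κ : ℝ, 0 ≤ κ → (∀ ρ, ‖gradient g ρ‖ ≤ κ * g ρ) →
      ∀ ρ₀, |Real.pi ^ (-(n : ℝ) / 2) * (∫ ρ, g (ρ₀ + ρ) * Real.exp (-‖ρ‖ ^ 2)) - g ρ₀| ≤
        C' * κ * g ρ₀ :=
  stmt_15_general n C N hC hN
end

section
/- Let d ≥ 1, let V satisfy Assumption (A), and let φ be the Hamiltonian flow of p. Fix T > 0 and let f : ℝ^{2d} → (0, ∞) be an order function such that f ∘ φ^t is an order function with structure constants uniform in t ∈ [0, T]. Then for every ℓ ∈ ℕ there exist C_ℓ > 0 and k ∈ ℕ such that for every smooth a : ℝ^{2d} → ℂ belonging to the symbol class S(f) and every t ∈ [0, T], the composition a ∘ φ^t belongs to S(f ∘ φ^t) with |a ∘ φ^t|^{(ℓ)}_{S(f ∘ φ^t)} ≤ C_ℓ |a|^{(k)}_{S(f)}, i.e. max_{0 ≤ j ≤ ℓ} sup_ρ ‖D^j (a ∘ φ^t)(ρ)‖ / (f ∘ φ^t)(ρ) ≤ C_ℓ · max_{0 ≤ j ≤ k} sup_ρ ‖D^j a(ρ)‖ / f(ρ).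 The constants C_ℓ depend on f only through its structure constants. -/
open Real MeasureTheory

noncomputable section

/-- An order function with structure constants `(C, N)`:
`f(ρ₀+ρ) ≤ C f(ρ₀) ⟨ρ⟩^N`. -/
def IsOrderFn {d : ℕ} (f : E d × E d → ℝ) (C N : ℝ) : Prop :=
  ∀ ρ₀ ρ : E d × E d, f (ρ₀ + ρ) ≤ C * f ρ₀ * (1 + ‖ρ‖ ^ 2) ^ (N / 2)

namespace Stmt17Aux

open ContDiff



variable {P : Type} [NormedAddCommGroup P] [NormedSpace ℝ P]

/-- Partial derivative in the second variable, as a continuous linear map. -/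
def pd {Y : Type} [NormedAddCommGroup Y] [NormedSpace ℝ Y] (w : ℝ × P → Y) (q : ℝ × P) :
    P →L[ℝ] Y := (fderiv ℝ w q).comp (ContinuousLinearMap.inr ℝ ℝ P)

/-- Partial derivative in the first variable. -/
def pt {Y : Type} [NormedAddCommGroup Y] [NormedSpace ℝ Y] (w : ℝ × P → Y) (q : ℝ × P) :
    Y := fderiv ℝ w q (1, 0)

variable {Y : Type} [NormedAddCommGroup Y] [NormedSpace ℝ Y] {w : ℝ × P → Y}

lemma natCast_le_inf (n : ℕ) : ((n : ℕ∞) : WithTop ℕ∞) ≤ ∞ :=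
  WithTop.coe_le_coe.mpr le_top

lemma one_le_inf : (1 : WithTop ℕ∞) ≤ ∞ := by exact WithTop.coe_le_coe.mpr le_top

lemma two_le_inf : (2 : WithTop ℕ∞) ≤ ∞ := by exact WithTop.coe_le_coe.mpr le_top

lemma pd_smooth (hw : ContDiff ℝ ∞ w) : ContDiff ℝ ∞ (pd w) := by
  have : ContDiff ℝ ∞ (fderiv ℝ w) := hw.fderiv_right (le_of_eq (by rfl))
  exact (((ContinuousLinearMap.compL ℝ P (ℝ × P) Y).flip
    (ContinuousLinearMap.inr ℝ ℝ P)).contDiff).comp this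

lemma pt_smooth (hw : ContDiff ℝ ∞ w) : ContDiff ℝ ∞ (pt w) := by
  have : ContDiff ℝ ∞ (fderiv ℝ w) := hw.fderiv_right (le_of_eq (by rfl))
  exact ((ContinuousLinearMap.apply ℝ Y ((1 : ℝ), (0 : P))).contDiff).comp this

lemma hasFDerivAt_pair (t : ℝ) (ρ : P) :
    HasFDerivAt (fun σ : P => ((t, σ) : ℝ × P)) (ContinuousLinearMap.inr ℝ ℝ P) ρ := by
  have h := (hasFDerivAt_const (𝕜 := ℝ) t ρ).prodMk (hasFDerivAt_id ρ)
  convert h using 1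
  · rfl
  · ext v <;> simp

lemma fderiv_slice (hw : ContDiff ℝ ∞ w) (t : ℝ) (ρ : P) :
    fderiv ℝ (fun σ => w (t, σ)) ρ = pd w (t, ρ) := by
  have h1 := hasFDerivAt_pair (P := P) t ρ
  have h2 : HasFDerivAt w (fderiv ℝ w (t, ρ)) (t, ρ) :=
    (hw.differentiable (by simp)).differentiableAt.hasFDerivAt
  exact (h2.comp ρ h1).fderiv

lemma hasDerivAt_slice (hw : ContDiff ℝ ∞ w) (t : ℝ) (ρ : P) :
    HasDerivAt (fun s => w (s, ρ)) (pt w (t, ρ)) t := by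
  have h1 : HasDerivAt (fun s : ℝ => ((s, ρ) : ℝ × P)) ((1 : ℝ), (0 : P)) t :=
    (hasDerivAt_id t).prodMk (hasDerivAt_const t ρ)
  have h2 : HasFDerivAt w (fderiv ℝ w (t, ρ)) (t, ρ) :=
    (hw.differentiable (by simp)).differentiableAt.hasFDerivAt
  exact h2.comp_hasDerivAt t h1

lemma pt_pd_comm (hw : ContDiff ℝ ∞ w) (q : ℝ × P) : pt (pd w) q = pd (pt w) q := by
  have hfd : ContDiff ℝ ∞ (fderiv ℝ w) := hw.fderiv_right (le_of_eq (by rfl))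
  have hS : HasFDerivAt (fderiv ℝ w) (fderiv ℝ (fderiv ℝ w) q) q :=
    (hfd.differentiable (by simp)).differentiableAt.hasFDerivAt
  set S := fderiv ℝ (fderiv ℝ w) q with hSdef
  set Rc : ((ℝ × P) →L[ℝ] Y) →L[ℝ] (P →L[ℝ] Y) :=
    (ContinuousLinearMap.compL ℝ P (ℝ × P) Y).flip (ContinuousLinearMap.inr ℝ ℝ P) with hRc
  set Ap : ((ℝ × P) →L[ℝ] Y) →L[ℝ] Y :=
    ContinuousLinearMap.apply ℝ Y ((1 : ℝ), (0 : P)) with hAp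
  have hpd : pd w = fun q' => Rc (fderiv ℝ w q') := rfl
  have hpt : pt w = fun q' => Ap (fderiv ℝ w q') := rfl
  have e1 : fderiv ℝ (pd w) q = Rc.comp S := by
    rw [hpd]; exact (Rc.hasFDerivAt.comp q hS).fderiv
  have e2 : fderiv ℝ (pt w) q = Ap.comp S := by
    rw [hpt]; exact (Ap.hasFDerivAt.comp q hS).fderiv
  have hsymm : ∀ v u : ℝ × P, S v u = S u v := by
    intro v u
    exact (hw.contDiffAt.isSymmSndFDerivAt (by rw [minSmoothness_of_isRCLikeNormedField]; exact two_le_inf)).eq v u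
  show fderiv ℝ (pd w) q (1, 0) = (fderiv ℝ (pt w) q).comp (ContinuousLinearMap.inr ℝ ℝ P)
  rw [e1, e2]
  ext v
  simp only [ContinuousLinearMap.comp_apply, ContinuousLinearMap.inr_apply, hRc, hAp,
    ContinuousLinearMap.flip_apply, ContinuousLinearMap.compL_apply,
    ContinuousLinearMap.apply_apply]
  exact hsymm (1, 0) (0, v)

theorem key_interchange : ∀ (n : ℕ) {Y : Type} [NormedAddCommGroup Y] [NormedSpace ℝ Y]
    (w : ℝ × P → Y), ContDiff ℝ ∞ w → ∀ (t : ℝ) (ρ : P),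
    HasDerivAt (fun s => iteratedFDeriv ℝ n (fun σ => w (s, σ)) ρ)
      (iteratedFDeriv ℝ n (fun σ => pt w (t, σ)) ρ) t
  | 0, Y, _, _, w, hw, t, ρ => by
    have h := hasDerivAt_slice hw t ρ
    simp only [iteratedFDeriv_zero_eq_comp, Function.comp]
    exact ((continuousMultilinearCurryFin0 ℝ P
      Y).symm.toLinearIsometry.toContinuousLinearMap).hasFDerivAt.comp_hasDerivAt t h
  | (n+1), Y, _, _, w, hw, t, ρ => by
    set J := (continuousMultilinearCurryRightEquiv' ℝ n P Y).symm with hJ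
    have e1 : ∀ (v : ℝ × P → Y), ContDiff ℝ ∞ v → ∀ s,
        iteratedFDeriv ℝ (n+1) (fun σ => v (s, σ)) ρ
          = J (iteratedFDeriv ℝ n (fun σ => pd v (s, σ)) ρ) := by
      intro v hv s
      rw [iteratedFDeriv_succ_eq_comp_right]
      simp only [Function.comp_apply]
      congr 1
      congr 1
      funext y
      exact fderiv_slice hv s y
    have IH' := key_interchange n (pd w) (pd_smooth hw) t ρ
    have e3 : (fun σ => pt (pd w) (t, σ)) = fun σ => pd (pt w) (t, σ) :=
      funext fun σ => pt_pd_comm hw (t, σ)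
    rw [e3] at IH'
    have hcomp := (J.toLinearIsometry.toContinuousLinearMap).hasFDerivAt.comp_hasDerivAt t IH'
    have g1 : (fun s => iteratedFDeriv ℝ (n+1) (fun σ => w (s, σ)) ρ)
        = fun s => J (iteratedFDeriv ℝ n (fun σ => pd w (s, σ)) ρ) :=
      funext (e1 w hw)
    rw [g1, e1 (pt w) (pt_smooth hw) t]
    exact hcomp

section GradientAux

variable {H : Type} [NormedAddCommGroup H] [InnerProductSpace ℝ H] [CompleteSpace H]

/-- The Fréchet–Riesz isometry over `ℝ`, as a plain (non-semilinear) isometry equiv. -/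
noncomputable def rieszEquiv : (H →L[ℝ] ℝ) ≃ₗᵢ[ℝ] H where
  toFun f := (InnerProductSpace.toDual ℝ H).symm f
  invFun x := InnerProductSpace.toDual ℝ H x
  map_add' f g := map_add _ f g
  map_smul' c f := by
    have h := (InnerProductSpace.toDual ℝ H).symm.map_smulₛₗ c f
    simp only [starRingEnd_apply, star_trivial] at h
    simpa using h
  left_inv f := by simp
  right_inv x := by simp
  norm_map' f := by
    exact LinearIsometryEquiv.norm_map (InnerProductSpace.toDual ℝ H).symm f

lemma gradient_eq_riesz_fderiv (V : H → ℝ) : gradient V = (⇑(rieszEquiv (H := H))) ∘ (fderiv ℝ V) := rfl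

lemma contDiff_gradient {V : H → ℝ} (hV : ContDiff ℝ ∞ V) : ContDiff ℝ ∞ (gradient V) := by
  rw [gradient_eq_riesz_fderiv]
  exact ((rieszEquiv (H := H)).toLinearIsometry.toContinuousLinearMap.contDiff).comp
    (hV.fderiv_right (le_of_eq (by rfl)))

lemma norm_iteratedFDeriv_gradient {V : H → ℝ} (j : ℕ) (x : H) :
    ‖iteratedFDeriv ℝ j (gradient V) x‖ = ‖iteratedFDeriv ℝ (j + 1) V x‖ := by
  rw [gradient_eq_riesz_fderiv, LinearIsometryEquiv.norm_iteratedFDeriv_comp_left,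
    norm_iteratedFDeriv_fderiv]

end GradientAux

lemma clm_iteratedFDeriv_norm_le {X Z : Type} [NormedAddCommGroup X] [NormedSpace ℝ X]
    [NormedAddCommGroup Z] [NormedSpace ℝ Z] (L : X →L[ℝ] Z) {n : ℕ} (hn : 1 ≤ n) (x : X) :
    ‖iteratedFDeriv ℝ n (fun y => L y) x‖ ≤ ‖L‖ := by
  obtain ⟨m, rfl⟩ : ∃ m, n = m + 1 := ⟨n - 1, (Nat.succ_pred_eq_of_pos hn).symm⟩
  rw [iteratedFDeriv_succ_eq_comp_right, Function.comp_apply, LinearIsometryEquiv.norm_map]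
  have hfd : (fun y => fderiv ℝ (fun z => L z) y) = fun _ : X => L := by
    funext y; exact L.fderiv
  rw [hfd]
  match m with
  | 0 => rw [norm_iteratedFDeriv_zero]
  | (k+1) =>
    rw [iteratedFDeriv_const_of_ne (Nat.succ_ne_zero k) L]
    simp only [Pi.zero_apply]
    exact le_trans (le_of_eq (norm_zero (E := ContinuousMultilinearMap ℝ (fun _ : Fin (k+1) => X) (X →L[ℝ] Z)))) (norm_nonneg L)

section FlowSection

variable {d : ℕ}

/-- The Hamiltonian vector field. -/
def Fv (V : E d → ℝ) (ρ : E d × E d) : E d × E d := (ρ.2, -gradient V ρ.1)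

lemma Fv_smooth {V : E d → ℝ} (hV : ContDiff ℝ ∞ V) : ContDiff ℝ ∞ (Fv V) :=
  contDiff_snd.prodMk ((contDiff_gradient hV).comp contDiff_fst).neg

lemma norm_iteratedFDeriv_Fv {V : E d → ℝ} (hV : ContDiff ℝ ∞ V) {n : ℕ} (hn : 1 ≤ n)
    {Cb : ℝ} (hCb : ∀ x, ‖iteratedFDeriv ℝ (n + 1) V x‖ ≤ Cb) (ρ : E d × E d) :
    ‖iteratedFDeriv ℝ n (Fv V) ρ‖ ≤ 1 + Cb := by
  set A : (E d × E d) →L[ℝ] (E d × E d) :=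
    (ContinuousLinearMap.snd ℝ (E d) (E d)).prod 0 with hA
  have hAn : ‖A‖ ≤ 1 := by
    refine ContinuousLinearMap.opNorm_le_bound _ zero_le_one (fun q => ?_)
    have h0 : A q = (q.2, (0 : E d)) := rfl
    rw [h0, one_mul]
    calc ‖((q.2 : E d), (0 : E d))‖ = max ‖q.2‖ ‖(0 : E d)‖ := rfl
      _ = ‖q.2‖ := by rw [norm_zero]; exact max_eq_left (norm_nonneg _)
      _ ≤ ‖q‖ := norm_snd_le q
  set g1 : E d → E d := fun x => -gradient V x with hg1
  have hg1s : ContDiff ℝ ∞ g1 := (contDiff_gradient hV).neg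
  set inrE := ContinuousLinearMap.inr ℝ (E d) (E d) with hinr
  have hinrn : ‖inrE‖ ≤ 1 := by
    refine ContinuousLinearMap.opNorm_le_bound _ zero_le_one (fun x => ?_)
    rw [one_mul]
    calc ‖inrE x‖ = max ‖(0 : E d)‖ ‖x‖ := rfl
      _ = ‖x‖ := by rw [norm_zero]; exact max_eq_right (norm_nonneg _)
      _ ≤ ‖x‖ := le_rfl
  set fstE := ContinuousLinearMap.fst ℝ (E d) (E d) with hfst
  have hFveq : Fv V = fun q => A q + (⇑inrE ∘ (g1 ∘ ⇑fstE)) q := by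
    funext q
    show ((q.2 : E d), -gradient V q.1) = ((q.2 : E d), (0 : E d)) + ((0 : E d), g1 q.1)
    rw [Prod.mk_add_mk, add_zero, zero_add]
  have hcomps : ContDiff ℝ ∞ (⇑inrE ∘ (g1 ∘ ⇑fstE)) :=
    inrE.contDiff.comp (hg1s.comp fstE.contDiff)
  have hgrad : ∀ x, ‖iteratedFDeriv ℝ n g1 x‖ ≤ Cb := by
    intro x
    have e1 : ‖iteratedFDeriv ℝ n g1 x‖ = ‖iteratedFDeriv ℝ n (gradient V) x‖ := by
      rw [show g1 = -gradient V from rfl, iteratedFDeriv_neg_apply, norm_neg]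
    rw [e1, norm_iteratedFDeriv_gradient]
    exact hCb x
  rw [hFveq, iteratedFDeriv_add_apply' (A.contDiff.of_le (natCast_le_inf n)).contDiffAt (hcomps.of_le (natCast_le_inf n)).contDiffAt]
  refine (norm_add_le _ _).trans ?_
  have hterm1 : ‖iteratedFDeriv ℝ n (fun q => A q) ρ‖ ≤ 1 :=
    (clm_iteratedFDeriv_norm_le A hn ρ).trans hAn
  have hterm2 : ‖iteratedFDeriv ℝ n (⇑inrE ∘ (g1 ∘ ⇑fstE)) ρ‖ ≤ Cb := by
    rw [ContinuousLinearMap.iteratedFDeriv_comp_left inrE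
      (((hg1s.comp fstE.contDiff).of_le (natCast_le_inf n)).contDiffAt (x := ρ)) le_rfl]
    refine (ContinuousLinearMap.norm_compContinuousMultilinearMap_le _ _).trans ?_
    have h2 : ‖iteratedFDeriv ℝ n (g1 ∘ ⇑fstE) ρ‖ ≤ Cb := by
      rw [ContinuousLinearMap.iteratedFDeriv_comp_right fstE
        (hg1s.of_le (natCast_le_inf n)) ρ le_rfl]
      refine (ContinuousMultilinearMap.norm_compContinuousLinearMap_le _ _).trans ?_
      have hprod : (∏ _i : Fin n, ‖fstE‖) ≤ 1 :=
        Finset.prod_le_one (fun _ _ => norm_nonneg _)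
          (fun _ _ => ContinuousLinearMap.norm_fst_le ..)
      calc ‖iteratedFDeriv ℝ n g1 (fstE ρ)‖ * ∏ _i : Fin n, ‖fstE‖
          ≤ Cb * 1 := by
            refine mul_le_mul (hgrad _) hprod ?_ ?_
            · exact Finset.prod_nonneg (fun _ _ => norm_nonneg _)
            · exact (norm_nonneg _).trans (hgrad (fstE ρ))
        _ = Cb := mul_one Cb
    calc ‖inrE‖ * ‖iteratedFDeriv ℝ n (g1 ∘ ⇑fstE) ρ‖ ≤ 1 * Cb := by
          refine mul_le_mul hinrn h2 (norm_nonneg _) zero_le_one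
      _ = Cb := one_mul Cb
  linarith

lemma Vderiv_bound {V : E d → ℝ} {m : ℝ} (hV : AssumptionA V m) {k : ℕ} (hk : 2 ≤ k) :
    ∃ Cb ≥ 0, ∀ x : E d, ‖iteratedFDeriv ℝ k V x‖ ≤ Cb := by
  obtain ⟨Ck, hCk0, hCk⟩ := hV.2.2.2.2.2 k
  refine ⟨Ck, hCk0.le, fun x => (hCk x).trans ?_⟩
  have hbase : (1 : ℝ) ≤ 1 + ‖x‖ ^ 2 := by nlinarith [sq_nonneg ‖x‖]
  have hexp : m - (k : ℝ) / 2 ≤ 0 := by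
    have h1 : m ≤ 1 := hV.2.2.2.1
    have h2 : (2 : ℝ) ≤ (k : ℝ) := by exact_mod_cast hk
    linarith
  have h1 : (1 + ‖x‖ ^ 2 : ℝ) ^ (m - (k : ℝ) / 2) ≤ 1 :=
    Real.rpow_le_one_of_one_le_of_nonpos hbase hexp
  nlinarith

lemma Fv_bound_max {V : E d → ℝ} {m : ℝ} (hV : AssumptionA V m) (J : ℕ) :
    ∃ K, 1 ≤ K ∧ ∀ n, 1 ≤ n → n ≤ J → ∀ ρ : E d × E d, ‖iteratedFDeriv ℝ n (Fv V) ρ‖ ≤ K := by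
  have hVs : ContDiff ℝ ∞ V := hV.1.of_le (by simp)
  induction J with
  | zero => exact ⟨1, le_rfl, fun n h1 h0 => by omega⟩
  | succ J IH =>
    obtain ⟨K, hK1, hK⟩ := IH
    obtain ⟨Cb, hCb0, hCb⟩ := Vderiv_bound hV (k := J + 2) (by omega)
    refine ⟨max K (1 + Cb), le_trans hK1 (le_max_left _ _), fun n h1 hn ρ => ?_⟩
    rcases Nat.lt_or_ge n (J + 1) with h | h
    · exact (hK n h1 (by omega) ρ).trans (le_max_left _ _)
    · have hnJ : n = J + 1 := by omega
      subst hnJ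
      exact (norm_iteratedFDeriv_Fv hVs h1 hCb ρ).trans (le_max_right _ _)

end FlowSection

set_option maxHeartbeats 2000000 in
lemma flow_bound {d : ℕ} {V : E d → ℝ} {m : ℝ} (hV : AssumptionA V m)
    {φ : ℝ → E d × E d → E d × E d} (hφ : IsHamFlow V φ) (T : ℝ) (n : ℕ) :
    ∃ D, 1 ≤ D ∧ ∀ i, 1 ≤ i → i ≤ n → ∀ t ∈ Set.Icc (0:ℝ) T, ∀ ρ : E d × E d,
      ‖iteratedFDeriv ℝ i (φ t) ρ‖ ≤ D := by
  have hVs : ContDiff ℝ ∞ V := hV.1.of_le (by simp)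
  have hΦ : ContDiff ℝ ∞ (fun q : ℝ × (E d × E d) => φ q.1 q.2) := hφ.1.of_le (by simp)
  have hFv : ContDiff ℝ ∞ (Fv V) := Fv_smooth hVs
  have hφt : ∀ t, ContDiff ℝ ∞ (φ t) := fun t => hΦ.comp (contDiff_const.prodMk contDiff_id)
  have hptΦ : ∀ q : ℝ × (E d × E d),
      pt (fun q : ℝ × (E d × E d) => φ q.1 q.2) q = Fv V (φ q.1 q.2) := by
    intro q
    have h1 := hasDerivAt_slice hΦ q.1 q.2
    have h2 := hφ.2.2 q.1 q.2
    exact h1.unique h2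
  have hflowderiv : ∀ (k : ℕ) (t : ℝ) (ρ : E d × E d),
      HasDerivAt (fun s => iteratedFDeriv ℝ k (φ s) ρ)
        (iteratedFDeriv ℝ k (fun σ => Fv V (φ t σ)) ρ) t := by
    intro k t ρ
    have h := key_interchange k (fun q : ℝ × (E d × E d) => φ q.1 q.2) hΦ t ρ
    have e : (fun σ => pt (fun q : ℝ × (E d × E d) => φ q.1 q.2) (t, σ))
        = fun σ => Fv V (φ t σ) := funext fun σ => hptΦ (t, σ)
    rw [e] at h
    exact h
  induction n with
  | zero => exact ⟨1, le_rfl, by omega⟩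
  | succ n IH =>
    obtain ⟨D, hD1, hD⟩ := IH
    obtain ⟨K, hK1, hK⟩ := Fv_bound_max hV (n + 2)
    have hD0 : (0:ℝ) < D := lt_of_lt_of_le zero_lt_one hD1
    have hK0 : (0:ℝ) < K := lt_of_lt_of_le zero_lt_one hK1
    set τ : ℝ := (n.factorial : ℝ) * K * D^(n+1) with hτ
    have hτ0 : 0 ≤ τ := by positivity
    set K2 : ℝ := 2^n * K with hK2
    have hK20 : (0:ℝ) < K2 := by positivity
    set ε : ℝ := 2^n * τ with hε
    have hε0 : 0 ≤ ε := by positivity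
    have hstep : ∀ s ∈ Set.Icc (0:ℝ) T, ∀ ρ : E d × E d,
        ‖iteratedFDeriv ℝ (n+1) (fun σ => Fv V (φ s σ)) ρ‖
          ≤ K2 * ‖iteratedFDeriv ℝ (n+1) (φ s) ρ‖ + ε := by
      intro s hs ρ
      have hu : ContDiff ℝ ∞ (φ s) := hφt s
      set G := ‖iteratedFDeriv ℝ (n+1) (φ s) ρ‖ with hG
      have hG0 : 0 ≤ G := norm_nonneg _
      have e0 : ‖iteratedFDeriv ℝ (n+1) (fun σ => Fv V (φ s σ)) ρ‖
          = ‖iteratedFDeriv ℝ n (fderiv ℝ (fun σ => Fv V (φ s σ))) ρ‖ :=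
        (norm_iteratedFDeriv_fderiv).symm
      set Bc := ContinuousLinearMap.compL ℝ (E d × E d) (E d × E d) (E d × E d) with hBc
      set ff : (E d × E d) → ((E d × E d) →L[ℝ] (E d × E d)) :=
        fun σ => fderiv ℝ (Fv V) (φ s σ) with hff
      set gg : (E d × E d) → ((E d × E d) →L[ℝ] (E d × E d)) := fderiv ℝ (φ s) with hgg
      have e1 : fderiv ℝ (fun σ => Fv V (φ s σ)) = fun σ => Bc (ff σ) (gg σ) := by
        funext σ
        rw [show (fun σ' => Fv V (φ s σ')) = (Fv V) ∘ (φ s) from rfl,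
          fderiv_comp σ ((hFv.differentiable (by simp)).differentiableAt)
            ((hu.differentiable (by simp)).differentiableAt)]
        rfl
      have hf' : ContDiff ℝ ∞ ff :=
        (hFv.fderiv_right (le_of_eq (by rfl))).comp hu
      have hg' : ContDiff ℝ ∞ gg := hu.fderiv_right (le_of_eq (by rfl))
      have hbil := Bc.norm_iteratedFDeriv_le_of_bilinear hf' hg' ρ (n := n) (natCast_le_inf n)
      have hterm : ∀ i ∈ Finset.range (n+1),
          (n.choose i : ℝ) * ‖iteratedFDeriv ℝ i ff ρ‖ * ‖iteratedFDeriv ℝ (n-i) gg ρ‖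
            ≤ (n.choose i : ℝ) * (K * G + τ) := by
        intro i hi
        have hi' : i ≤ n := by have := Finset.mem_range.mp hi; omega
        have hprod : ‖iteratedFDeriv ℝ i ff ρ‖ * ‖iteratedFDeriv ℝ (n-i) gg ρ‖
            ≤ K * G + τ := by
          rcases Nat.eq_zero_or_pos i with rfl | hipos
          · have h00 : ‖iteratedFDeriv ℝ 0 ff ρ‖ = ‖fderiv ℝ (Fv V) (φ s ρ)‖ := by
              rw [norm_iteratedFDeriv_zero]
            have h01 : ‖fderiv ℝ (Fv V) (φ s ρ)‖ ≤ K := by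
              have e2 : ‖fderiv ℝ (Fv V) (φ s ρ)‖ = ‖iteratedFDeriv ℝ 1 (Fv V) (φ s ρ)‖ := by
                rw [← norm_iteratedFDeriv_fderiv (n := 0), norm_iteratedFDeriv_zero]
              rw [e2]; exact hK 1 le_rfl (by omega) _
            have h02 : ‖iteratedFDeriv ℝ (n-0) gg ρ‖ = G := by
              rw [Nat.sub_zero, hG, hgg, norm_iteratedFDeriv_fderiv]
            rw [h00, h02]
            nlinarith [mul_le_mul_of_nonneg_right h01 hG0]
          · have hXi : ‖iteratedFDeriv ℝ i ff ρ‖ ≤ (i.factorial : ℝ) * K * D^i := by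
              have hcl := norm_iteratedFDeriv_comp_le (g := fderiv ℝ (Fv V)) (f := φ s)
                (hFv.fderiv_right (le_of_eq (by rfl))) hu (natCast_le_inf i) ρ
                (C := K) (D := D) ?_ ?_
              · exact hcl
              · intro j hj
                rw [norm_iteratedFDeriv_fderiv]
                exact hK (j+1) (by omega) (by omega) _
              · intro j hj1 hj2
                exact (hD j hj1 (by omega) s hs ρ).trans (le_self_pow₀ hD1 (by omega))
            have hYi : ‖iteratedFDeriv ℝ (n-i) gg ρ‖ ≤ D := by
              rw [hgg, norm_iteratedFDeriv_fderiv]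
              exact hD (n-i+1) (by omega) (by omega) s hs ρ
            have hfac : (i.factorial : ℝ) ≤ (n.factorial : ℝ) := by
              exact_mod_cast Nat.factorial_le hi'
            have hpow : D^i * D ≤ D^(n+1) := by
              rw [← pow_succ]
              exact pow_le_pow_right₀ hD1 (by omega)
            have hXY : ‖iteratedFDeriv ℝ i ff ρ‖ * ‖iteratedFDeriv ℝ (n-i) gg ρ‖
                ≤ ((i.factorial : ℝ) * K * D^i) * D :=
              mul_le_mul hXi hYi (norm_nonneg _) (by positivity)
            have h3 : ((i.factorial : ℝ) * K * D^i) * D ≤ τ := by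
              calc ((i.factorial : ℝ) * K * D^i) * D
                  = ((i.factorial : ℝ) * K) * (D^i * D) := by ring
                _ ≤ ((n.factorial : ℝ) * K) * (D^(n+1)) := by
                    refine mul_le_mul ?_ hpow (by positivity) (by positivity)
                    exact mul_le_mul_of_nonneg_right hfac hK0.le
                _ = τ := by rw [hτ]
            nlinarith [mul_nonneg hK0.le hG0]
        calc (n.choose i : ℝ) * ‖iteratedFDeriv ℝ i ff ρ‖ * ‖iteratedFDeriv ℝ (n-i) gg ρ‖
            = (n.choose i : ℝ)
              * (‖iteratedFDeriv ℝ i ff ρ‖ * ‖iteratedFDeriv ℝ (n-i) gg ρ‖) := by ring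
          _ ≤ (n.choose i : ℝ) * (K * G + τ) :=
              mul_le_mul_of_nonneg_left hprod (by positivity)
      have hsum := Finset.sum_le_sum hterm
      have hchoose : (∑ i ∈ Finset.range (n+1), (n.choose i : ℝ)) = 2^n := by
        exact_mod_cast Nat.sum_range_choose n
      have hsumnn : (0:ℝ) ≤ ∑ i ∈ Finset.range (n+1),
          (n.choose i : ℝ) * ‖iteratedFDeriv ℝ i ff ρ‖ * ‖iteratedFDeriv ℝ (n-i) gg ρ‖ := by
        refine Finset.sum_nonneg (fun i _ => ?_)
        positivity
      have hsumval : ∑ i ∈ Finset.range (n+1), (n.choose i : ℝ) * (K * G + τ)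
          = 2^n * (K * G + τ) := by
        rw [← Finset.sum_mul, hchoose]
      rw [e0, e1]
      refine le_trans hbil ?_
      have hfin : ‖Bc‖ * (∑ i ∈ Finset.range (n+1),
          (n.choose i : ℝ) * ‖iteratedFDeriv ℝ i ff ρ‖ * ‖iteratedFDeriv ℝ (n-i) gg ρ‖)
          ≤ 1 * (2^n * (K * G + τ)) :=
        mul_le_mul (by rw [hBc]; exact ContinuousLinearMap.norm_compL_le ℝ _ _ _)
          (hsum.trans (le_of_eq hsumval)) hsumnn zero_le_one
      have heq : (1:ℝ) * (2^n * (K * G + τ)) = K2 * G + ε := by rw [hK2, hε, hτ]; ring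
      linarith
    have hgron : ∀ ρ : E d × E d, ∀ s ∈ Set.Icc (0:ℝ) T,
        ‖iteratedFDeriv ℝ (n+1) (φ s) ρ‖ ≤ gronwallBound 1 K2 ε (s - 0) := by
      intro ρ
      refine norm_le_gronwallBound_of_norm_deriv_right_le
        (f := fun s => iteratedFDeriv ℝ (n+1) (φ s) ρ)
        (f' := fun s => iteratedFDeriv ℝ (n+1) (fun σ => Fv V (φ s σ)) ρ) ?_ ?_ ?_ ?_
      · exact (continuous_iff_continuousAt.mpr
          fun s => (hflowderiv (n+1) s ρ).continuousAt).continuousOn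
      · exact fun s _ => (hflowderiv (n+1) s ρ).hasDerivWithinAt
      · have hid : φ 0 = fun x : E d × E d => x := funext hφ.2.1
        show ‖iteratedFDeriv ℝ (n+1) (φ 0) ρ‖ ≤ 1
        rw [hid]
        exact (clm_iteratedFDeriv_norm_le (ContinuousLinearMap.id ℝ (E d × E d))
          (by omega) ρ).trans ContinuousLinearMap.norm_id_le
      · exact fun s hs => hstep s (Set.Ico_subset_Icc_self hs) ρ
    set Dnew : ℝ := Real.exp (K2*T) + ε/K2 * Real.exp (K2*T) with hDnew
    have hgb : ∀ s ∈ Set.Icc (0:ℝ) T, gronwallBound 1 K2 ε (s - 0) ≤ Dnew := by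
      intro s hs
      rw [gronwallBound_of_K_ne_0 (ne_of_gt hK20)]
      have h1 : Real.exp (K2*(s-0)) ≤ Real.exp (K2*T) := by
        apply Real.exp_le_exp.mpr
        have : s - 0 ≤ T := by simpa using hs.2
        exact mul_le_mul_of_nonneg_left this hK20.le
      have h2 : 0 ≤ ε / K2 := div_nonneg hε0 hK20.le
      have h4 : (0:ℝ) < Real.exp (K2*(s-0)) := Real.exp_pos _
      rw [hDnew]
      nlinarith
    refine ⟨max D (max 1 Dnew), le_trans hD1 (le_max_left _ _), fun i h1 hi t ht ρ => ?_⟩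
    rcases Nat.lt_or_ge i (n+1) with h | h
    · exact (hD i h1 (by omega) t ht ρ).trans (le_max_left _ _)
    · have hieq : i = n+1 := by omega
      subst hieq
      exact ((hgron ρ t ht).trans (hgb t ht)).trans
        (le_trans (le_max_right 1 Dnew) (le_max_right _ _))

end Stmt17Aux

/-- Composition with the flow maps `S(f)` into `S(f ∘ φᵗ)` with seminorm bounds
uniform in `t ∈ [0,T]`, the constants depending on `f` only through its structure
constants `(C, N)`. -/
theorem stmt_17 (d : ℕ) (hd : 1 ≤ d) (V : E d → ℝ) (m : ℝ) (hV : AssumptionA V m)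
    (φ : ℝ → E d × E d → E d × E d) (hφ : IsHamFlow V φ)
    (T : ℝ) (hT : 0 < T) (ℓ : ℕ) (C N : ℝ) (hC : 0 < C) (hN : 0 ≤ N) :
    ∃ Cℓ > 0, ∃ k : ℕ, ∀ f : E d × E d → ℝ, (∀ ρ, 0 < f ρ) →
      IsOrderFn f C N →
      (∀ t ∈ Set.Icc (0:ℝ) T, IsOrderFn (fun ρ => f (φ t ρ)) C N) →
      ∀ a : E d × E d → ℂ, ContDiff ℝ (⊤ : ℕ∞) a → ∀ M : ℝ, 0 ≤ M →
      (∀ j ≤ k, ∀ ρ : E d × E d, ‖iteratedFDeriv ℝ j a ρ‖ ≤ M * f ρ) →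
      ∀ t ∈ Set.Icc (0:ℝ) T, ∀ j ≤ ℓ, ∀ ρ : E d × E d,
        ‖iteratedFDeriv ℝ j (fun σ => a (φ t σ)) ρ‖ ≤ Cℓ * M * f (φ t ρ) := by
  classical
  obtain ⟨D, hD1, hD⟩ := Stmt17Aux.flow_bound hV hφ T ℓ
  have hD0 : (0:ℝ) < D := zero_lt_one.trans_le hD1
  refine ⟨(ℓ.factorial : ℝ) * D^ℓ, by positivity, ℓ, ?_⟩
  intro f hf _ _ a ha M hM hbnd t ht j hj ρ
  have hΦ : ContDiff ℝ ((⊤ : ℕ∞) : WithTop ℕ∞) (fun q : ℝ × (E d × E d) => φ q.1 q.2) := hφ.1.of_le (by simp)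
  have hft : ContDiff ℝ ((⊤ : ℕ∞) : WithTop ℕ∞) (φ t) := hΦ.comp (contDiff_const.prodMk contDiff_id)
  have hfρ0 : 0 ≤ M * f (φ t ρ) := mul_nonneg hM (hf _).le
  have hcomp := norm_iteratedFDeriv_comp_le (g := a) (f := φ t)
    (ha.of_le (by simp)) hft (Stmt17Aux.natCast_le_inf j) ρ
    (C := M * f (φ t ρ)) (D := D) ?_ ?_
  · have e : (fun σ => a (φ t σ)) = a ∘ (φ t) := rfl
    rw [e]
    refine hcomp.trans ?_
    have h1 : (j.factorial : ℝ) ≤ (ℓ.factorial : ℝ) := by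
      exact_mod_cast Nat.factorial_le hj
    have h2 : D^j ≤ D^ℓ := pow_le_pow_right₀ hD1 hj
    have step1 : (j.factorial : ℝ) * D^j ≤ (ℓ.factorial : ℝ) * D^ℓ :=
      mul_le_mul h1 h2 (pow_nonneg hD0.le j) (Nat.cast_nonneg _)
    calc (j.factorial : ℝ) * (M * f (φ t ρ)) * D^j
        = ((j.factorial : ℝ) * D^j) * (M * f (φ t ρ)) := by ring
      _ ≤ ((ℓ.factorial : ℝ) * D^ℓ) * (M * f (φ t ρ)) :=
          mul_le_mul_of_nonneg_right step1 hfρ0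
      _ = (ℓ.factorial : ℝ) * D^ℓ * M * f (φ t ρ) := by ring
  · intro i hi
    exact hbnd i (hi.trans hj) _
  · intro i hi1 hi2
    exact (hD i hi1 (hi2.trans hj) t ht ρ).trans (le_self_pow₀ hD1 (by omega))

end
end
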